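/- arXiv:2305.15572 — 8 statements merged into one kernel-verified Lean document; each statement's English description precedes it below -/
import Mathlib

section
/- For every real number w with −1 ≤ w ≤ 0, one has (1 + w)² ≤ 2·(1 + e·w·e^w), where e = exp(1). -/
/-- For `-1 ≤ w ≤ 0`, `(1 + w)² ≤ 2·(1 + e·w·e^w)`; this is the Lambert-W inequality
`(1 + W(x))² ≤ 2(1 + e·x)` for `-1/e ≤ x ≤ 0` under the substitution `x = w·e^w`. -/
theorem sq_one_add_le (w : ℝ) (h1 : -1 ≤ w) (h2 : w ≤ 0) :
    (1 + w) ^ 2 ≤ 2 * (1 + Real.exp 1 * w * Real.exp w) := by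
  have hE : Real.exp 1 * w * Real.exp w = w * Real.exp (1 + w) := by
    rw [Real.exp_add]; ring
  rw [hE]
  set t : ℝ := 1 + w with ht
  clear_value t
  have ht0 : 0 ≤ t := by linarith
  have ht1 : t ≤ 1 := by linarith
  have hb := Real.exp_bound' ht0 ht1 (n := 4) (by norm_num)
  have hsum : (∑ m ∈ Finset.range 4, t ^ m / m.factorial) =
      1 + t + t ^ 2 / 2 + t ^ 3 / 6 := by
    simp [Finset.sum_range_succ, Nat.factorial]
  rw [hsum] at hb
  norm_num [Nat.factorial] at hb
  have hw : w = t - 1 := by rw [ht]; ring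
  rw [hw]
  have hkey : (t - 1) * (1 + t + t ^ 2 / 2 + t ^ 3 / 6 + t ^ 4 * 5 / 96) ≤
      (t - 1) * Real.exp t :=
    mul_le_mul_of_nonpos_left hb (by linarith)
  nlinarith [pow_nonneg ht0 3, pow_nonneg ht0 4, pow_nonneg ht0 5]
end

section
/- Let (Ω, P) be a probability space and let ε : Fin d → Ω → ℝ be independent random variables, each distributed as a standard Gaussian N(0,1). Let λ : Fin d → ℝ be nonnegative with ∑_i λ_i > 0. Then for every t > 0, P( ω : √(∑_{i} λ_i · (ε_i(ω))²) > t ) ≤ 2 · exp( −t² / (2 ∑_i λ_i) ). -/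
/-!
The function `x ↦ cosh √x = ∑ xⁿ / (2n)!` is convex on `[0, ∞)`, being a series of convex
monomials. Jensen's inequality with the weights `λᵢ / S`, `S = ∑ λᵢ`, then bounds
`cosh (s √(∑ λᵢ εᵢ²))` pointwise by `∑ (λᵢ / S) cosh (s √S εᵢ)`, whose expectation is
`exp (s² S / 2)` by the Gaussian moment generating function. Hence
`E exp (s √(∑ λᵢ εᵢ²)) ≤ 2 exp (s² S / 2)`, and the Chernoff bound at `s = t / S` gives the claim.
-/

open MeasureTheory ProbabilityTheory Real
open scoped Nat

lemma hasSum_cosh_sqrt {x : ℝ} (hx : 0 ≤ x) :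
    HasSum (fun n : ℕ => x ^ n / (2 * n)!) (cosh √x) := by
  simpa only [pow_mul, sq_sqrt hx] using hasSum_cosh √x

lemma convexOn_cosh_sqrt : ConvexOn ℝ (Set.Ici 0) fun x : ℝ => cosh √x := by
  refine ⟨convex_Ici 0, fun x hx y hy a b ha hb hab => ?_⟩
  have hxy : 0 ≤ a • x + b • y := (convex_Ici 0) hx hy ha hb hab
  have hsum := ((hasSum_cosh_sqrt hx).mul_left a).add ((hasSum_cosh_sqrt hy).mul_left b)
  simp only [smul_eq_mul] at hxy ⊢
  refine hasSum_le (fun n => ?_) (hasSum_cosh_sqrt hxy) hsum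
  have hpow := (convexOn_pow n).2 hx hy ha hb hab
  simp only [smul_eq_mul] at hpow
  calc (a * x + b * y) ^ n / (2 * n)! ≤ (a * x ^ n + b * y ^ n) / (2 * n)! := by gcongr
    _ = a * (x ^ n / (2 * n)!) + b * (y ^ n / (2 * n)!) := by ring

lemma cosh_sqrt_sum_mul_sq_le {ι : Type*} (s : Finset ι) (w y : ι → ℝ)
    (hw : ∀ i ∈ s, 0 ≤ w i) (hw₁ : ∑ i ∈ s, w i = 1) :
    cosh √(∑ i ∈ s, w i * y i ^ 2) ≤ ∑ i ∈ s, w i * cosh (y i) := by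
  have h := convexOn_cosh_sqrt.map_sum_le hw hw₁ fun i _ => sq_nonneg (y i)
  simpa only [smul_eq_mul, sqrt_sq_eq_abs, cosh_abs] using h

lemma cosh_mul_sqrt_sum_mul_sq_le {ι : Type*} [Fintype ι] (lam x : ι → ℝ)
    (hlam : ∀ i, 0 ≤ lam i) (hS : 0 < ∑ i, lam i) (r : ℝ) :
    cosh (r * √(∑ i, lam i * x i ^ 2)) ≤
      ∑ i, lam i / (∑ j, lam j) * cosh (r * √(∑ j, lam j) * x i) := by
  set S := ∑ j, lam j
  have hrescale : (r * √(∑ i, lam i * x i ^ 2)) ^ 2 =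
      ∑ i, lam i / S * (r * √S * x i) ^ 2 := by
    rw [mul_pow, sq_sqrt (Finset.sum_nonneg fun i _ => mul_nonneg (hlam i) (sq_nonneg _)),
      Finset.mul_sum]
    refine Finset.sum_congr rfl fun i _ => ?_
    rw [mul_pow, mul_pow, sq_sqrt hS.le]
    field_simp
  calc cosh (r * √(∑ i, lam i * x i ^ 2))
      = cosh √((r * √(∑ i, lam i * x i ^ 2)) ^ 2) := by rw [sqrt_sq_eq_abs, cosh_abs]
    _ ≤ _ := by
      rw [hrescale]
      refine cosh_sqrt_sum_mul_sq_le _ _ _ (fun i _ => div_nonneg (hlam i) hS.le) ?_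
      rw [← Finset.sum_div, div_self hS.ne']

section Gaussian

variable {Ω : Type*} [MeasurableSpace Ω] {μ : Measure Ω} {Y : Ω → ℝ} {v : NNReal}

lemma integrable_exp_mul_of_map_eq_gaussianReal {m : ℝ} (hY : μ.map Y = gaussianReal m v)
    (u : ℝ) : Integrable (fun ω => exp (u * Y ω)) μ := by
  have hYm : AEMeasurable Y μ := aemeasurable_of_map_neZero (by rw [hY]; infer_instance)
  have h := integrable_exp_mul_gaussianReal (μ := m) (v := v) u
  rw [← hY] at h
  exact (integrable_map_measure (by fun_prop) hYm).mp h

lemma integrable_cosh_mul_of_map_eq_gaussianReal {m : ℝ} (hY : μ.map Y = gaussianReal m v)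
    (u : ℝ) : Integrable (fun ω => cosh (u * Y ω)) μ := by
  simp_rw [cosh_eq, ← neg_mul]
  exact ((integrable_exp_mul_of_map_eq_gaussianReal hY u).add
    (integrable_exp_mul_of_map_eq_gaussianReal hY (-u))).div_const 2

lemma integral_cosh_mul_of_map_eq_gaussianReal (hY : μ.map Y = gaussianReal 0 v) (u : ℝ) :
    ∫ ω, cosh (u * Y ω) ∂μ = exp (v * u ^ 2 / 2) := by
  simp_rw [cosh_eq, ← neg_mul]
  rw [integral_div, integral_add (integrable_exp_mul_of_map_eq_gaussianReal hY u)
    (integrable_exp_mul_of_map_eq_gaussianReal hY (-u))]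
  have hmgf := mgf_gaussianReal hY
  simp only [mgf] at hmgf
  rw [hmgf, hmgf]
  simp only [zero_mul, zero_add, neg_sq]
  ring

end Gaussian

lemma exp_le_two_mul_cosh (x : ℝ) : exp x ≤ 2 * cosh x := by
  rw [cosh_eq]
  linarith [exp_pos (-x)]

lemma exp_mul_sqrt_sum_mul_sq_le {ι : Type*} [Fintype ι] (lam x : ι → ℝ)
    (hlam : ∀ i, 0 ≤ lam i) (hS : 0 < ∑ i, lam i) (r : ℝ) :
    exp (r * √(∑ i, lam i * x i ^ 2)) ≤
      2 * ∑ i, lam i / (∑ j, lam j) * cosh (r * √(∑ j, lam j) * x i) :=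
  (exp_le_two_mul_cosh _).trans
    (mul_le_mul_of_nonneg_left (cosh_mul_sqrt_sum_mul_sq_le lam x hlam hS r) zero_le_two)

section GaussianNorm

variable {Ω ι : Type*} [MeasurableSpace Ω] {μ : Measure Ω} [Fintype ι] {ε : ι → Ω → ℝ}
  {lam : ι → ℝ}

lemma integrable_exp_mul_sqrt_sum_mul_sq (hε : ∀ i, μ.map (ε i) = gaussianReal 0 1)
    (hlam : ∀ i, 0 ≤ lam i) (hS : 0 < ∑ i, lam i) (r : ℝ) :
    Integrable (fun ω => exp (r * √(∑ i, lam i * ε i ω ^ 2))) μ := by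
  have hεm i : AEMeasurable (ε i) μ :=
    aemeasurable_of_map_neZero (by rw [hε i]; infer_instance)
  have hdom : Integrable
      (fun ω => 2 * ∑ i, lam i / (∑ j, lam j) * cosh (r * √(∑ j, lam j) * ε i ω)) μ :=
    (integrable_finsetSum _ fun i _ =>
      (integrable_cosh_mul_of_map_eq_gaussianReal (hε i) _).const_mul _).const_mul 2
  refine hdom.mono' (by fun_prop) (ae_of_all _ fun ω => ?_)
  rw [norm_of_nonneg (exp_pos _).le]
  exact exp_mul_sqrt_sum_mul_sq_le lam _ hlam hS r

lemma mgf_sqrt_sum_mul_sq_le (hε : ∀ i, μ.map (ε i) = gaussianReal 0 1)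
    (hlam : ∀ i, 0 ≤ lam i) (hS : 0 < ∑ i, lam i) (r : ℝ) :
    mgf (fun ω => √(∑ i, lam i * ε i ω ^ 2)) μ r ≤ 2 * exp (r ^ 2 * (∑ i, lam i) / 2) := by
  set S := ∑ i, lam i
  have hcosh i : Integrable (fun ω => cosh (r * √S * ε i ω)) μ :=
    integrable_cosh_mul_of_map_eq_gaussianReal (hε i) _
  calc mgf (fun ω => √(∑ i, lam i * ε i ω ^ 2)) μ r
      ≤ ∫ ω, 2 * ∑ i, lam i / S * cosh (r * √S * ε i ω) ∂μ :=
        integral_mono (integrable_exp_mul_sqrt_sum_mul_sq hε hlam hS r)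
          ((integrable_finsetSum _ fun i _ => (hcosh i).const_mul _).const_mul 2)
          fun ω => exp_mul_sqrt_sum_mul_sq_le lam _ hlam hS r
    _ = 2 * ∑ i, lam i / S * exp ((r * √S) ^ 2 / 2) := by
        rw [integral_const_mul, integral_finsetSum _ fun i _ => (hcosh i).const_mul _]
        simp only [integral_const_mul, integral_cosh_mul_of_map_eq_gaussianReal (hε _),
          NNReal.coe_one, one_mul]
    _ = 2 * exp (r ^ 2 * S / 2) := by
        rw [← Finset.sum_mul, ← Finset.sum_div, div_self hS.ne', one_mul, mul_pow,
          sq_sqrt hS.le]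

end GaussianNorm

theorem gaussian_norm_tail_bound_general {Ω : Type*} [MeasureSpace Ω]
    [IsProbabilityMeasure (ℙ : Measure Ω)] {d : ℕ}
    (ε : Fin d → Ω → ℝ)
    (hgauss : ∀ i, Measure.map (ε i) ℙ = gaussianReal 0 1)
    (lam : Fin d → ℝ) (hlam : ∀ i, 0 ≤ lam i) (hsum : 0 < ∑ i, lam i)
    (t : ℝ) (ht : 0 < t) :
    (ℙ {ω | t < Real.sqrt (∑ i, lam i * (ε i ω) ^ 2)}).toReal ≤
      2 * Real.exp (-t ^ 2 / (2 * ∑ i, lam i)) := by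
  set S := ∑ i, lam i
  set X : Ω → ℝ := fun ω => √(∑ i, lam i * ε i ω ^ 2)
  have hs : 0 ≤ t / S := div_nonneg ht.le hsum.le
  calc (ℙ {ω | t < X ω}).toReal ≤ (ℙ : Measure Ω).real {ω | t ≤ X ω} :=
        measureReal_mono fun ω (h : t < X ω) => h.le
    _ ≤ exp (-(t / S) * t) * mgf X ℙ (t / S) :=
        measure_ge_le_exp_mul_mgf t hs (integrable_exp_mul_sqrt_sum_mul_sq hgauss hlam hsum _)
    _ ≤ exp (-(t / S) * t) * (2 * exp ((t / S) ^ 2 * S / 2)) := by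
        gcongr
        exact mgf_sqrt_sum_mul_sq_le hgauss hlam hsum _
    _ = 2 * exp (-t ^ 2 / (2 * S)) := by
        rw [mul_left_comm, ← exp_add]
        congr 2
        field_simp
        ring

/-- Tail bound for the norm of a Gaussian vector: if `ε i` are independent standard Gaussians
and `λ i ≥ 0` with positive sum, then
`P(√(∑ λ i ε i²) > t) ≤ 2 exp(-t² / (2 ∑ λ i))` for every `t > 0`. -/
theorem gaussian_norm_tail_bound {Ω : Type*} [MeasureSpace Ω]
    [IsProbabilityMeasure (ℙ : Measure Ω)] {d : ℕ}
    (ε : Fin d → Ω → ℝ) (hmeas : ∀ i, Measurable (ε i))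
    (hindep : iIndepFun ε ℙ)
    (hgauss : ∀ i, Measure.map (ε i) ℙ = gaussianReal 0 1)
    (lam : Fin d → ℝ) (hlam : ∀ i, 0 ≤ lam i) (hsum : 0 < ∑ i, lam i)
    (t : ℝ) (ht : 0 < t) :
    (ℙ {ω | t < Real.sqrt (∑ i, lam i * (ε i ω) ^ 2)}).toReal ≤
      2 * Real.exp (-t ^ 2 / (2 * ∑ i, lam i)) :=
  gaussian_norm_tail_bound_general ε hgauss lam hlam hsum t ht
end

section
/- Let f : ℝ^d → ℝ be differentiable and L-smooth (L > 0), and suppose f(x) ≥ f* for all x. Let T ≥ 1, and let (x_t)_{t≥1}, (ĝ_t)_{t≥1}, (η_t)_{t≥1}, (ξ_t)_{t≥1} satisfy: 0 < η_t ≤ 1/L, ξ_t ≥ 0, ‖ĝ_t − ∇f(x_t)‖² ≤ ξ_t, and x_{t+1} = x_t − η_t ĝ_t for all t. Then min_{1 ≤ t ≤ T} ‖∇f(x_t)‖² ≤ ( 2·(f(x_1) − f*) + ∑_{t=1}^{T} η_t ξ_t ) / ( ∑_{t=1}^{T} η_t ). -/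
/-!
By the descent lemma for an `L`-smooth `f`, a step `x ↦ x - η • ĝ` with `L η ≤ 1` satisfies
`η ‖∇f x‖² ≤ 2 (f x - f (x - η • ĝ)) + η ‖ĝ - ∇f x‖²`. Summing over `t = 1, …, T` telescopes to
`∑ η_t ‖∇f(x_t)‖² ≤ 2 (f x_1 - f*) + ∑ η_t ξ_t`, and the minimum of `‖∇f(x_t)‖²` is at most
its `η`-weighted average.
-/

open Finset
open scoped InnerProductSpace

theorem Finset.inf'_mul_sum_le_sum_mul {ι R : Type*} [CommSemiring R] [LinearOrder R]
    [IsOrderedRing R] {s : Finset ι} (hs : s.Nonempty) {a w : ι → R}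
    (hw : ∀ i ∈ s, 0 ≤ w i) : s.inf' hs a * ∑ i ∈ s, w i ≤ ∑ i ∈ s, w i * a i := by
  rw [mul_sum]
  refine sum_le_sum fun i hi ↦ ?_
  rw [mul_comm]
  exact mul_le_mul_of_nonneg_left (inf'_le a hi) (hw i hi)

theorem Finset.sum_Icc_le_sub_add_sum {M : Type*} [AddCommGroup M] [PartialOrder M]
    [IsOrderedAddMonoid M] {a b u : ℕ → M} {m n : ℕ} (hmn : m ≤ n)
    (h : ∀ t ∈ Icc m n, a t ≤ u t - u (t + 1) + b t) :
    ∑ t ∈ Icc m n, a t ≤ u m - u (n + 1) + ∑ t ∈ Icc m n, b t :=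
  calc ∑ t ∈ Icc m n, a t ≤ ∑ t ∈ Icc m n, (u t - u (t + 1) + b t) := sum_le_sum h
    _ = u m - u (n + 1) + ∑ t ∈ Icc m n, b t := by
      rw [sum_add_distrib, ← neg_sub (u (n + 1)), ← sum_Icc_sub hmn, ← sum_neg_distrib]
      simp only [neg_sub]

variable {E : Type*} [NormedAddCommGroup E] [InnerProductSpace ℝ E] [CompleteSpace E]

theorem Differentiable.le_add_inner_gradient_add_sq_of_lipschitz_gradient {f : E → ℝ} {L : ℝ}
    (hf : Differentiable ℝ f)
    (hsmooth : ∀ x y, ‖gradient f x - gradient f y‖ ≤ L * ‖x - y‖) (p q : E) :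
    f q ≤ f p + ⟪gradient f p, q - p⟫_ℝ + L / 2 * ‖q - p‖ ^ 2 := by
  set v := q - p
  -- `φ` is `f` along the segment minus its quadratic upper model; smoothness makes `φ' ≤ 0`.
  set φ : ℝ → ℝ := fun s ↦
    f (p + s • v) - s * ⟪gradient f p, v⟫_ℝ - L / 2 * s ^ 2 * ‖v‖ ^ 2
  have hφ : ∀ s, HasDerivAt φ
      (⟪gradient f (p + s • v), v⟫_ℝ - ⟪gradient f p, v⟫_ℝ - L * s * ‖v‖ ^ 2) s := by
    intro s
    have hline : HasDerivAt (fun s : ℝ ↦ p + s • v) v s := by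
      simpa using ((hasDerivAt_id s).smul_const v).const_add p
    have hfline : HasDerivAt (fun s : ℝ ↦ f (p + s • v)) ⟪gradient f (p + s • v), v⟫_ℝ s :=
      (hf _).hasGradientAt.hasFDerivAt.comp_hasDerivAt s hline
    have hlin : HasDerivAt (fun s : ℝ ↦ s * ⟪gradient f p, v⟫_ℝ) ⟪gradient f p, v⟫_ℝ s := by
      simpa using (hasDerivAt_id s).mul_const ⟪gradient f p, v⟫_ℝ
    have hquad : HasDerivAt (fun s : ℝ ↦ L / 2 * s ^ 2 * ‖v‖ ^ 2) (L * s * ‖v‖ ^ 2) s :=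
      (((hasDerivAt_pow 2 s).const_mul (L / 2)).mul_const (‖v‖ ^ 2)).congr_deriv (by ring)
    exact (hfline.sub hlin).sub hquad
  have hφ_anti : AntitoneOn φ (Set.Ici 0) := by
    refine antitoneOn_of_deriv_nonpos (convex_Ici 0)
      (fun s _ ↦ (hφ s).continuousAt.continuousWithinAt)
      (fun s _ ↦ (hφ s).differentiableAt.differentiableWithinAt) fun s hs ↦ ?_
    rw [interior_Ici, Set.mem_Ioi] at hs
    rw [(hφ s).deriv, ← inner_sub_left]
    calc ⟪gradient f (p + s • v) - gradient f p, v⟫_ℝ - L * s * ‖v‖ ^ 2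
        ≤ L * ‖s • v‖ * ‖v‖ - L * s * ‖v‖ ^ 2 := by
          gcongr
          exact (real_inner_le_norm _ _).trans
            (mul_le_mul_of_nonneg_right (by simpa using hsmooth (p + s • v) p) (norm_nonneg v))
      _ = 0 := by rw [norm_smul, Real.norm_of_nonneg hs.le]; ring
  have hφ01 := hφ_anti (Set.mem_Ici.2 le_rfl) (Set.mem_Ici.2 zero_le_one) zero_le_one
  simp only [φ, v, one_smul, zero_smul, add_zero, add_sub_cancel, one_mul, zero_mul, one_pow]
    at hφ01
  linarith

theorem Differentiable.biased_gradient_step_le {f : E → ℝ} {L η ξ : ℝ}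
    (hf : Differentiable ℝ f)
    (hsmooth : ∀ x y, ‖gradient f x - gradient f y‖ ≤ L * ‖x - y‖) {x g : E}
    (hη : 0 < η) (hηL : η ≤ 1 / L) (hbias : ‖g - gradient f x‖ ^ 2 ≤ ξ) :
    η * ‖gradient f x‖ ^ 2 ≤ 2 * f x - 2 * f (x - η • g) + η * ξ := by
  have hL : 0 < L := one_div_pos.mp (hη.trans_le hηL)
  have hLη : L * η ≤ 1 := by rwa [le_div_iff₀ hL, mul_comm] at hηL
  have hdesc := hf.le_add_inner_gradient_add_sq_of_lipschitz_gradient hsmooth x (x - η • g)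
  rw [sub_sub_cancel_left, inner_neg_right, real_inner_smul_right, real_inner_comm, norm_neg,
    norm_smul, Real.norm_of_nonneg hη.le] at hdesc
  have hquad : L / 2 * (η * ‖g‖) ^ 2 ≤ η / 2 * ‖g‖ ^ 2 := by
    have := mul_le_mul_of_nonneg_right hLη (by positivity : 0 ≤ η * ‖g‖ ^ 2 / 2)
    linarith
  have hcomplete : -(η * ⟪g, gradient f x⟫_ℝ) + η / 2 * ‖g‖ ^ 2 =
      η / 2 * (‖g - gradient f x‖ ^ 2 - ‖gradient f x‖ ^ 2) := by
    rw [norm_sub_sq_real]; ring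
  have hbias' := mul_le_mul_of_nonneg_left hbias hη.le
  linarith

theorem biased_gd_min_grad_norm_le_general {d : ℕ}
    (f : EuclideanSpace ℝ (Fin d) → ℝ) (L : ℝ)
    (hdiff : Differentiable ℝ f)
    (hsmooth : ∀ x y, ‖gradient f x - gradient f y‖ ≤ L * ‖x - y‖)
    (fstar : ℝ) (hfstar : ∀ x, fstar ≤ f x)
    (T : ℕ) (hT : 1 ≤ T)
    (x g : ℕ → EuclideanSpace ℝ (Fin d)) (η ξ : ℕ → ℝ)
    (hη : ∀ t, 1 ≤ t → 0 < η t ∧ η t ≤ 1 / L)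
    (hbias : ∀ t, 1 ≤ t → ‖g t - gradient f (x t)‖ ^ 2 ≤ ξ t)
    (hupdate : ∀ t, 1 ≤ t → x (t + 1) = x t - η t • g t) :
    (Finset.Icc 1 T).inf' (Finset.nonempty_Icc.mpr hT)
        (fun t => ‖gradient f (x t)‖ ^ 2) ≤
      (2 * (f (x 1) - fstar) + ∑ t ∈ Finset.Icc 1 T, η t * ξ t) /
        (∑ t ∈ Finset.Icc 1 T, η t) := by
  have hη_pos : ∀ t ∈ Icc 1 T, 0 < η t := fun t ht ↦ (hη t (mem_Icc.1 ht).1).1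
  rw [le_div_iff₀ (sum_pos hη_pos (nonempty_Icc.2 hT))]
  calc _ ≤ ∑ t ∈ Icc 1 T, η t * ‖gradient f (x t)‖ ^ 2 :=
        inf'_mul_sum_le_sum_mul _ fun t ht ↦ (hη_pos t ht).le
    _ ≤ 2 * f (x 1) - 2 * f (x (T + 1)) + ∑ t ∈ Icc 1 T, η t * ξ t :=
        sum_Icc_le_sub_add_sum (u := fun t ↦ 2 * f (x t)) hT fun t ht ↦ by
          have ht1 := (mem_Icc.1 ht).1
          rw [hupdate t ht1]
          exact hdiff.biased_gradient_step_le hsmooth (hη t ht1).1 (hη t ht1).2 (hbias t ht1)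
    _ ≤ 2 * (f (x 1) - fstar) + ∑ t ∈ Icc 1 T, η t * ξ t := by linarith [hfstar (x (T + 1))]

/-- Convergence of gradient descent with biased gradient oracles: the minimum squared
gradient norm over the first `T` iterations is bounded via the cumulative bias. -/
theorem biased_gd_min_grad_norm_le {d : ℕ}
    (f : EuclideanSpace ℝ (Fin d) → ℝ) (L : ℝ) (hL : 0 < L)
    (hdiff : Differentiable ℝ f)
    (hsmooth : ∀ x y, ‖gradient f x - gradient f y‖ ≤ L * ‖x - y‖)
    (fstar : ℝ) (hfstar : ∀ x, fstar ≤ f x)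
    (T : ℕ) (hT : 1 ≤ T)
    (x g : ℕ → EuclideanSpace ℝ (Fin d)) (η ξ : ℕ → ℝ)
    (hη : ∀ t, 1 ≤ t → 0 < η t ∧ η t ≤ 1 / L)
    (hξ : ∀ t, 1 ≤ t → 0 ≤ ξ t)
    (hbias : ∀ t, 1 ≤ t → ‖g t - gradient f (x t)‖ ^ 2 ≤ ξ t)
    (hupdate : ∀ t, 1 ≤ t → x (t + 1) = x t - η t • g t) :
    (Finset.Icc 1 T).inf' (Finset.nonempty_Icc.mpr hT)
        (fun t => ‖gradient f (x t)‖ ^ 2) ≤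
      (2 * (f (x 1) - fstar) + ∑ t ∈ Finset.Icc 1 T, η t * ξ t) /
        (∑ t ∈ Finset.Icc 1 T, η t) :=
  biased_gd_min_grad_norm_le_general f L hdiff hsmooth fstar hfstar T hT x g η ξ hη hbias hupdate
end

section
/- Let m ≥ 1 be a natural number and let α, β, σ be real numbers with 0 ≤ α ≤ 1 and σ > 0. Let J be the m×m all-ones real matrix and let K̂ be the (2m)×(2m) block matrix K̂ = [[J, αJ], [αJ, J]] + σ² I, indexed by Fin m ⊕ Fin m. Let v be the vector whose first m entries equal −β and whose last m entries equal β. Then K̂ is invertible and v ⬝ᵥ (K̂⁻¹ ·ᵥ v) = 2 m β² / ( m(1 − α) + σ² ). -/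
open Matrix

/-!
The vector `v = (-β𝟙, β𝟙)` is an eigenvector of `K̂` with eigenvalue `λ = m(1 - α) + σ²`, since the
all-ones block `J` multiplies `𝟙` by `m`. The block part of `K̂` is positive semidefinite for
`α² ≤ 1`, so `K̂` is positive definite and hence invertible; then `K̂⁻¹ v = λ⁻¹ v` and
`v ⬝ᵥ v = 2mβ²`.
-/

namespace Matrix

variable {n : Type*} [Fintype n]

theorem inv_mulVec_eq_inv_smul_of_mulVec_eq_smul [DecidableEq n] {K : Type*} [Field K]
    {A : Matrix n n K} (hA : IsUnit A.det) {v : n → K} {c : K} (h : A *ᵥ v = c • v) :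
    A⁻¹ *ᵥ v = c⁻¹ • v := by
  have hv : v = c • A⁻¹ *ᵥ v := by
    rw [← mulVec_smul, ← h, mulVec_mulVec, nonsing_inv_mul _ hA, one_mulVec]
  rcases eq_or_ne c 0 with rfl | hc
  · rw [hv]
    simp
  · rw [hv, smul_smul, inv_mul_cancel₀ hc, one_smul, ← hv]

theorem of_const_one_mulVec_const {R : Type*} [NonAssocSemiring R] (c : R) :
    (of fun _ _ => 1 : Matrix n n R) *ᵥ (fun _ => c) = (Fintype.card n : R) • fun _ => c := by
  ext i
  simp [mulVec, dotProduct]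

theorem posSemidef_of_const_one {R : Type*} [CommRing R] [PartialOrder R] [StarRing R]
    [StarOrderedRing R] : (of fun _ _ => 1 : Matrix n n R).PosSemidef := by
  simpa [vecMulVec] using posSemidef_vecMulVec_self_star (fun _ : n => (1 : R))

theorem fromBlocks_smul_mulVec_sumElim_neg {R : Type*} [CommRing R] {A : Matrix n n R}
    {w : n → R} {μ : R} (hw : A *ᵥ w = μ • w) (α : R) :
    fromBlocks A (α • A) (α • A) A *ᵥ Sum.elim (-w) w = ((1 - α) * μ) • Sum.elim (-w) w := by
  ext (i | i) <;> simp [fromBlocks_mulVec, smul_mulVec, mulVec_neg, hw] <;> ring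

theorem PosSemidef.fromBlocks_smul_self [DecidableEq n] {A : Matrix n n ℝ} (hA : A.PosSemidef)
    {α : ℝ} (hα : α ^ 2 ≤ 1) : (fromBlocks A (α • A) (α • A) A).PosSemidef := by
  let B : Matrix n (n ⊕ n) ℝ := fromCols 1 (α • 1)
  let C : Matrix n (n ⊕ n) ℝ := fromCols 0 1
  have hdecomp : fromBlocks A (α • A) (α • A) A = Bᴴ * A * B + (1 - α ^ 2) • (Cᴴ * A * C) := by
    simp only [B, C, Matrix.mul_assoc, mul_fromCols,
      conjTranspose_fromCols_eq_fromRows_conjTranspose, fromRows_mul]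
    ext (i | i) (j | j) <;> simp
    ring
  rw [hdecomp]
  exact (hA.conjTranspose_mul_mul_same B).add
    ((hA.conjTranspose_mul_mul_same C).smul (sub_nonneg.mpr hα))

end Matrix

theorem central_diff_quadratic_form_general (m : ℕ) (α β σ : ℝ)
    (hα0 : 0 ≤ α) (hα1 : α ≤ 1) (hσ : 0 < σ)
    (J : Matrix (Fin m) (Fin m) ℝ) (hJ : J = Matrix.of fun _ _ => (1 : ℝ))
    (Khat : Matrix (Fin m ⊕ Fin m) (Fin m ⊕ Fin m) ℝ)
    (hKhat : Khat = Matrix.fromBlocks J (α • J) (α • J) J + σ ^ 2 • (1 : Matrix (Fin m ⊕ Fin m) (Fin m ⊕ Fin m) ℝ))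
    (v : Fin m ⊕ Fin m → ℝ)
    (hv : v = Sum.elim (fun _ => -β) (fun _ => β)) :
    IsUnit Khat.det ∧
      v ⬝ᵥ (Khat⁻¹.mulVec v) = 2 * (m : ℝ) * β ^ 2 / ((m : ℝ) * (1 - α) + σ ^ 2) := by
  have hpd : Khat.PosDef := by
    rw [hKhat, hJ]
    refine PosDef.posSemidef_add (posSemidef_of_const_one.fromBlocks_smul_self ?_)
      (PosDef.one.smul (by positivity))
    nlinarith
  have hdet : IsUnit Khat.det := (isUnit_iff_isUnit_det Khat).mp hpd.isUnit
  have heig : Khat *ᵥ v = ((1 - α) * m + σ ^ 2) • v := by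
    obtain rfl : v = Sum.elim (-fun _ => β) fun _ => β := hv
    rw [hKhat, hJ, add_mulVec, smul_mulVec, one_mulVec,
      fromBlocks_smul_mulVec_sumElim_neg (of_const_one_mulVec_const β), add_smul, Fintype.card_fin]
  have hvv : v ⬝ᵥ v = 2 * (m : ℝ) * β ^ 2 := by
    simp only [hv, dotProduct, Fintype.sum_sum_type, Sum.elim_inl, Sum.elim_inr, neg_mul_neg,
      Finset.sum_const, Finset.card_univ, Fintype.card_fin, nsmul_eq_mul]
    ring
  refine ⟨hdet, ?_⟩
  rw [inv_mulVec_eq_inv_smul_of_mulVec_eq_smul hdet heig, dotProduct_smul, hvv, smul_eq_mul]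
  ring

/-- Quadratic form of the inverse regularized block kernel matrix with the central-differencing
cross-covariance vector `v = (-β, …, -β, β, …, β)`:
`v ⬝ᵥ K̂⁻¹ v = 2mβ²/(m(1-α)+σ²)`. -/
theorem central_diff_quadratic_form (m : ℕ) (hm : 1 ≤ m) (α β σ : ℝ)
    (hα0 : 0 ≤ α) (hα1 : α ≤ 1) (hσ : 0 < σ)
    (J : Matrix (Fin m) (Fin m) ℝ) (hJ : J = Matrix.of fun _ _ => (1 : ℝ))
    (Khat : Matrix (Fin m ⊕ Fin m) (Fin m ⊕ Fin m) ℝ)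
    (hKhat : Khat = Matrix.fromBlocks J (α • J) (α • J) J + σ ^ 2 • (1 : Matrix (Fin m ⊕ Fin m) (Fin m ⊕ Fin m) ℝ))
    (v : Fin m ⊕ Fin m → ℝ)
    (hv : v = Sum.elim (fun _ => -β) (fun _ => β)) :
    IsUnit Khat.det ∧
      v ⬝ᵥ (Khat⁻¹.mulVec v) = 2 * (m : ℝ) * β ^ 2 / ((m : ℝ) * (1 - α) + σ ^ 2) :=
  central_diff_quadratic_form_general m α β σ hα0 hα1 hσ J hJ Khat hKhat v hv
end

section
/- Let m ≥ 1 be a natural number and let α, β, σ be real numbers with 0 ≤ α ≤ 1 and σ > 0. Let J be the m×m all-ones real matrix and let K̂ be the (2m)×(2m) block matrix K̂ = [[J, αJ], [αJ, J]] + σ² I, indexed by Fin m ⊕ Fin m. Let w be the vector whose first m entries equal 0 and whose last m entries equal β. Then K̂ is invertible and w ⬝ᵥ (K̂⁻¹ ·ᵥ w) = (m β² / 2) · ( 1/(m(1 + α) + σ²) + 1/(m(1 − α) + σ²) ). -/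
open Matrix

/-- Quadratic form of the inverse regularized block kernel matrix with the forward-differencing
cross-covariance vector `w = (0, …, 0, β, …, β)`:
`w ⬝ᵥ K̂⁻¹ w = (mβ²/2)·(1/(m(1+α)+σ²) + 1/(m(1-α)+σ²))`. -/
theorem forward_diff_quadratic_form (m : ℕ) (hm : 1 ≤ m) (α β σ : ℝ)
    (hα0 : 0 ≤ α) (hα1 : α ≤ 1) (hσ : 0 < σ)
    (J : Matrix (Fin m) (Fin m) ℝ) (hJ : J = Matrix.of fun _ _ => (1 : ℝ))
    (Khat : Matrix (Fin m ⊕ Fin m) (Fin m ⊕ Fin m) ℝ)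
    (hKhat : Khat = Matrix.fromBlocks J (α • J) (α • J) J + σ ^ 2 • (1 : Matrix (Fin m ⊕ Fin m) (Fin m ⊕ Fin m) ℝ))
    (w : Fin m ⊕ Fin m → ℝ)
    (hw : w = Sum.elim (fun _ => (0 : ℝ)) (fun _ => β)) :
    IsUnit Khat.det ∧
      w ⬝ᵥ (Khat⁻¹.mulVec w) = ((m : ℝ) * β ^ 2 / 2) *
        (1 / ((m : ℝ) * (1 + α) + σ ^ 2) + 1 / ((m : ℝ) * (1 - α) + σ ^ 2)) := by
  subst hJ hKhat hw
  set s : ℝ := σ ^ 2 with hs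
  have hs0 : 0 < s := by positivity
  clear_value s
  have hm0 : (0 : ℝ) < (m : ℝ) := by exact_mod_cast hm
  have hD1 : 0 < (m : ℝ) * (1 + α) + s := by
    have : 0 ≤ (m : ℝ) * (1 + α) := by positivity
    linarith
  have hD2 : 0 < (m : ℝ) * (1 - α) + s := by
    have : 0 ≤ (m : ℝ) * (1 - α) := mul_nonneg (le_of_lt hm0) (by linarith)
    linarith
  set D : ℝ := ((m : ℝ) + s) ^ 2 - α ^ 2 * (m : ℝ) ^ 2 with hDdef
  have hDfac : D = ((m : ℝ) * (1 + α) + s) * ((m : ℝ) * (1 - α) + s) := by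
    rw [hDdef]; ring
  have hD0 : 0 < D := by rw [hDfac]; exact mul_pos hD1 hD2
  clear_value D
  set p : ℝ := -((m : ℝ) + s - α ^ 2 * m) / (s * D) with hp
  set q : ℝ := -α / D with hq
  have hsne : s ≠ 0 := ne_of_gt hs0
  have hDne : D ≠ 0 := ne_of_gt hD0
  have hc1 : ((m : ℝ) + s) * p + α * m * q + s⁻¹ = 0 := by
    rw [hp, hq]
    field_simp
    rw [hDdef]; ring
  have hc2 : α * m * p + ((m : ℝ) + s) * q + α * s⁻¹ = 0 := by
    rw [hp, hq]
    field_simp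
    rw [hDdef]; ring
  have hmp : (m : ℝ) * p + s⁻¹ = ((m : ℝ) + s) / D := by
    rw [hp]
    field_simp
    rw [hDdef]; ring
  clear_value p q
  clear hp hq hDdef
  -- the explicit inverse
  set M : Matrix (Fin m ⊕ Fin m) (Fin m ⊕ Fin m) ℝ := Matrix.of fun i j =>
    (if i.isLeft = j.isLeft then p else q) + s⁻¹ * (if i = j then 1 else 0) with hM
  have key : (Matrix.fromBlocks (Matrix.of fun _ _ => (1:ℝ)) (α • Matrix.of fun _ _ => (1:ℝ))
      (α • Matrix.of fun _ _ => (1:ℝ)) (Matrix.of fun _ _ => (1:ℝ))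
      + s • (1 : Matrix (Fin m ⊕ Fin m) (Fin m ⊕ Fin m) ℝ)) * M = 1 := by
    ext i j
    rcases i with a | a <;> rcases j with b | b <;>
      simp only [Matrix.mul_apply, Fintype.sum_sum_type, Matrix.add_apply,
        Matrix.fromBlocks_apply₁₁, Matrix.fromBlocks_apply₁₂, Matrix.fromBlocks_apply₂₁,
        Matrix.fromBlocks_apply₂₂, Matrix.smul_apply, Matrix.one_apply, Matrix.of_apply,
        hM, Sum.isLeft_inl, Sum.isLeft_inr, Sum.inl.injEq, Sum.inr.injEq,
        smul_eq_mul, mul_ite, mul_one, mul_zero, ite_mul, zero_mul, one_mul,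
        if_true, if_false, reduceCtorEq, add_mul, mul_add,
        Finset.sum_add_distrib, Finset.sum_ite_eq, Finset.sum_ite_eq',
        Finset.mem_univ, Finset.sum_const, Finset.card_univ, Fintype.card_fin,
        nsmul_eq_mul, Bool.true_eq_false, Bool.false_eq_true, zero_add, add_zero] <;>
      [skip; skip; skip; skip]
    · split_ifs with h
      · linear_combination hc1 + mul_inv_cancel₀ hsne
      · linear_combination hc1
    · linear_combination hc2
    · linear_combination hc2
    · split_ifs with h
      · linear_combination hc1 + mul_inv_cancel₀ hsne
      · linear_combination hc1
  refine ⟨Matrix.isUnit_det_of_right_inverse key, ?_⟩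
  rw [Matrix.inv_eq_right_inv key]
  simp only [dotProduct, Matrix.mulVec, Fintype.sum_sum_type, Sum.elim_inl,
    Sum.elim_inr, hM, Matrix.of_apply, Sum.isLeft_inl, Sum.isLeft_inr, Sum.inl.injEq,
    Sum.inr.injEq, mul_zero, zero_mul, mul_one, mul_ite, ite_mul, zero_add, add_zero,
    if_true, if_false, reduceCtorEq, Bool.true_eq_false, Bool.false_eq_true,
    Finset.sum_add_distrib, Finset.sum_ite_eq, Finset.sum_ite_eq', Finset.mem_univ,
    Finset.sum_const, Finset.card_univ, Fintype.card_fin, nsmul_eq_mul, mul_add, add_mul]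
  have hfin : (m:ℝ) * (β * ((m:ℝ) * (p * β))) + (m:ℝ) * (β * (s⁻¹ * β))
      = (m:ℝ) * β ^ 2 * (((m:ℝ) + s) / D) := by
    rw [← hmp]; ring
  rw [hfin, hDfac]
  have h1 : ((m:ℝ) * (1 + α) + s) ≠ 0 := hD1.ne'
  have h2 : ((m:ℝ) * (1 - α) + s) ≠ 0 := hD2.ne'
  field_simp
  ring
end

section
/- Let σ > 0 be real and m ≥ 1 a natural number, and define g : ℝ → ℝ by g(x) = 1 − (m · x · e^{−x}) / ( m(1 − e^{−x}) + σ² ). Then there exists x* > 0 such that g(x*) = x* and g(x) ≥ g(x*) for all x ≥ 0. -/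
/-!
Write `D(x) = a(1 - e^{-x}) + s` for the denominator, positive on `[0, ∞)`, and
`G_c(x) = (1 - c) D(x) - a x e^{-x}`, so that for `x ≥ 0` we have `c ≤ g(x) ↔ 0 ≤ G_c(x)`
and `g(x) = c ↔ G_c(x) = 0`. Since `G_c'(x) = a e^{-x} (x - c)`, every `G_c` is minimized
on `ℝ` at `x = c`. The diagonal `x ↦ G_x(x)` is `s > 0` at `0` and `-a/e < 0` at `1`, so it
vanishes at some `c ∈ (0, 1)`: then `g(c) = c`, and `G_c ≥ G_c(c) = 0` gives `g ≥ c`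
on `[0, ∞)`.
-/

open Real Set

noncomputable section

namespace RBFBound

variable {a s c x : ℝ}

def denom (a s x : ℝ) : ℝ := a * (1 - exp (-x)) + s

def bound (a s x : ℝ) : ℝ := 1 - a * x * exp (-x) / denom a s x

def gap (a s c x : ℝ) : ℝ := (1 - c) * denom a s x - a * x * exp (-x)

lemma denom_pos (ha : 0 ≤ a) (hs : 0 < s) (hx : 0 ≤ x) : 0 < denom a s x := by
  have : exp (-x) ≤ 1 := exp_le_one_iff.mpr (neg_nonpos.mpr hx)
  unfold denom
  nlinarith

lemma le_bound_iff (hD : 0 < denom a s x) : c ≤ bound a s x ↔ 0 ≤ gap a s c x := by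
  rw [bound, gap, le_sub_comm, div_le_iff₀ hD, sub_nonneg]

lemma bound_eq_iff (hD : 0 < denom a s x) : bound a s x = c ↔ gap a s c x = 0 := by
  rw [bound, gap, sub_eq_iff_eq_add', ← sub_eq_iff_eq_add, eq_div_iff hD.ne', sub_eq_zero]

lemma hasDerivAt_gap (a s c x : ℝ) : HasDerivAt (gap a s c) (a * exp (-x) * (x - c)) x := by
  have hexp : HasDerivAt (fun y => exp (-y)) (-exp (-x)) x := by
    simpa using (hasDerivAt_neg x).exp
  have hdenom : HasDerivAt (denom a s) (a * exp (-x)) x :=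
    (((hexp.const_sub 1).const_mul a).add_const s).congr_deriv (by ring)
  exact ((hdenom.const_mul (1 - c)).sub (((hasDerivAt_id' x).const_mul a).mul hexp)).congr_deriv
    (by ring)

lemma isMinOn_gap (ha : 0 ≤ a) (s c : ℝ) : IsMinOn (gap a s c) univ c := by
  have hdiff : Differentiable ℝ (gap a s c) := fun x => (hasDerivAt_gap a s c x).differentiableAt
  refine isMinOn_univ_of_deriv hdiff.continuous.continuousAt hdiff.differentiableOn
    hdiff.differentiableOn (fun x hx => ?_) (fun x hx => ?_) <;>
  rw [(hasDerivAt_gap a s c x).deriv]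
  · exact mul_nonpos_of_nonneg_of_nonpos (by positivity) (sub_nonpos.mpr (le_of_lt hx))
  · exact mul_nonneg (by positivity) (sub_nonneg.mpr (le_of_lt hx))

lemma exists_gap_self_eq_zero (ha : 0 < a) (hs : 0 < s) : ∃ c ∈ Ioo 0 1, gap a s c c = 0 := by
  have hcont : ContinuousOn (fun x => gap a s x x) (Icc 0 1) := by
    unfold gap denom
    fun_prop
  have h0 : gap a s 0 0 = s := by simp [gap, denom]
  have h1 : gap a s 1 1 = -(a * exp (-1)) := by simp [gap]
  have hmem : (0 : ℝ) ∈ Ioo (gap a s 1 1) (gap a s 0 0) := by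
    rw [h0, h1]
    exact ⟨neg_neg_of_pos (by positivity), hs⟩
  exact intermediate_value_Ioo' zero_le_one hcont hmem

end RBFBound

end

open RBFBound in
/-- For the RBF central-differencing bound `g(x) = 1 - m·x·e^{-x} / (m(1-e^{-x}) + σ²)`,
there is a positive minimizer of `g` over `[0, ∞)` which is a fixed point of `g`. -/
theorem rbf_bound_min_is_fixed_point (σ : ℝ) (hσ : 0 < σ) (m : ℕ) (hm : 1 ≤ m) :
    ∃ xstar : ℝ, 0 < xstar ∧
      (1 - ((m : ℝ) * xstar * Real.exp (-xstar)) /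
          ((m : ℝ) * (1 - Real.exp (-xstar)) + σ ^ 2) = xstar) ∧
      ∀ x : ℝ, 0 ≤ x →
        1 - ((m : ℝ) * xstar * Real.exp (-xstar)) /
            ((m : ℝ) * (1 - Real.exp (-xstar)) + σ ^ 2) ≤
          1 - ((m : ℝ) * x * Real.exp (-x)) /
            ((m : ℝ) * (1 - Real.exp (-x)) + σ ^ 2) := by
  have ha : (0 : ℝ) < m := by exact_mod_cast hm
  have hs : 0 < σ ^ 2 := by positivity
  obtain ⟨c, ⟨hc0, -⟩, hc⟩ := exists_gap_self_eq_zero ha hs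
  have hfix : bound m (σ ^ 2) c = c := (bound_eq_iff (denom_pos ha.le hs hc0.le)).mpr hc
  refine ⟨c, hc0, hfix, fun x hx => ?_⟩
  change bound m (σ ^ 2) c ≤ bound m (σ ^ 2) x
  rw [hfix, le_bound_iff (denom_pos ha.le hs hx), ← hc]
  exact isMinOn_univ_iff.mp (isMinOn_gap ha.le _ c) x
end

section
/- Let σ > 0 be real and m ≥ 1 a natural number. Then there exists x ≥ 0 such that 1 − (m · x · e^{−x}) / ( m(1 − e^{−x}) + σ² ) ≤ √( 2σ² / (m + σ²) ). -/
/-!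
Take `x = s := √(2σ²/(m + σ²))`, so that `1 - s²/2 = m/(m + σ²)`. Clearing the denominator,
the bound at `s` is `≤ s` exactly when `(1 - s)(m + σ²) ≤ m e^{-s}`, that is, when
`(1 - s) eˢ ≤ 1 - s²/2`. The difference `1 - t²/2 - (1 - t) eᵗ` vanishes at `0` and has
derivative `t (eᵗ - 1) ≥ 0` on `t ≥ 0`.
-/

open Real Set

lemma one_sub_mul_exp_le (s : ℝ) (hs : 0 ≤ s) : (1 - s) * exp s ≤ 1 - s ^ 2 / 2 := by
  set g : ℝ → ℝ := fun t => 1 - t ^ 2 / 2 - (1 - t) * exp t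
  have hg' (t : ℝ) : HasDerivAt g (t * (exp t - 1)) t := by
    have h := (((hasDerivAt_pow 2 t).div_const 2).const_sub 1).sub
      (((hasDerivAt_id t).const_sub 1).mul (hasDerivAt_exp t))
    exact h.congr_deriv (by simp only [id, Nat.cast_ofNat]; ring)
  have hmono : MonotoneOn g (Ici 0) := by
    refine monotoneOn_of_hasDerivWithinAt_nonneg (convex_Ici 0) (by fun_prop)
      (fun t _ => (hg' t).hasDerivWithinAt) fun t ht => ?_
    rw [interior_Ici] at ht
    exact mul_nonneg (le_of_lt ht) (sub_nonneg.mpr (one_le_exp (le_of_lt ht)))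
  have h0s := hmono self_mem_Ici hs hs
  norm_num [g] at h0s
  linarith

lemma one_sub_div_le_of_one_sub_sq_mul_eq {a c s : ℝ} (ha : 0 ≤ a) (hc : 0 < c) (hs : 0 ≤ s)
    (hsq : (1 - s ^ 2 / 2) * (a + c) = a) :
    1 - a * s * exp (-s) / (a * (1 - exp (-s)) + c) ≤ s := by
  have hexp_le : exp (-s) ≤ 1 := exp_le_one_iff.mpr (neg_nonpos.mpr hs)
  have hD : 0 < a * (1 - exp (-s)) + c := by nlinarith
  have hkey : (1 - s) * (a + c) ≤ a * exp (-s) := by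
    have hac : 0 ≤ (a + c) * exp (-s) := by positivity
    calc (1 - s) * (a + c) = (1 - s) * exp s * ((a + c) * exp (-s)) := by
          rw [exp_neg]; field_simp
      _ ≤ (1 - s ^ 2 / 2) * ((a + c) * exp (-s)) :=
          mul_le_mul_of_nonneg_right (one_sub_mul_exp_le s hs) hac
      _ = a * exp (-s) := by rw [← mul_assoc, hsq]
  have : 1 - s ≤ a * s * exp (-s) / (a * (1 - exp (-s)) + c) := by
    rw [le_div_iff₀ hD]
    linarith
  linarith

theorem rbf_bound_le_sqrt_general (σ : ℝ) (hσ : 0 < σ) (m : ℕ) :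
    ∃ x : ℝ, 0 ≤ x ∧
      1 - ((m : ℝ) * x * Real.exp (-x)) / ((m : ℝ) * (1 - Real.exp (-x)) + σ ^ 2) ≤
        Real.sqrt (2 * σ ^ 2 / ((m : ℝ) + σ ^ 2)) := by
  have hσ2 : 0 < σ ^ 2 := by positivity
  have hS : (m : ℝ) + σ ^ 2 ≠ 0 := by positivity
  set s := √(2 * σ ^ 2 / ((m : ℝ) + σ ^ 2))
  have hsq : (1 - s ^ 2 / 2) * ((m : ℝ) + σ ^ 2) = m := by
    rw [sq_sqrt (by positivity)]
    field_simp
    ring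
  exact ⟨s, sqrt_nonneg _, one_sub_div_le_of_one_sub_sq_mul_eq m.cast_nonneg hσ2 (sqrt_nonneg _) hsq⟩

/-- There is a point `x ≥ 0` at which the RBF central-differencing bound is at most
`√(2σ²/(m + σ²))`. -/
theorem rbf_bound_le_sqrt (σ : ℝ) (hσ : 0 < σ) (m : ℕ) (hm : 1 ≤ m) :
    ∃ x : ℝ, 0 ≤ x ∧
      1 - ((m : ℝ) * x * Real.exp (-x)) / ((m : ℝ) * (1 - Real.exp (-x)) + σ ^ 2) ≤
        Real.sqrt (2 * σ ^ 2 / ((m : ℝ) + σ ^ 2)) :=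
  rbf_bound_le_sqrt_general σ hσ m
end

section
/- Fix integers d ≥ 1, m ≥ 1 and a real σ > 0, and let b = 2md. Consider the RBF kernel k(x, x′) = exp(−½‖x − x′‖²) on ℝ^d. Then there exist points Z : Fin b → ℝ^d such that, writing K for the b×b matrix with entries K_{jl} = k(Z_j, Z_l), and G for the d×b matrix with entries G_{ij} = (Z_j)_i · exp(−½‖Z_j‖²), the matrix K + σ² I is invertible and d − trace( G · (K + σ² I)⁻¹ · Gᵀ ) ≤ d · √( 2σ² / (m + σ²) ). -/
/-
Put 2m points ±ε eᵢ on each coordinate axis (each sign m times). The Gaussian kernel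
`exp (-½‖x - y‖²) = exp (-½‖x‖²) exp ⟪x, y⟫ exp (-½‖y‖²)` is positive semidefinite: by the Schur
product theorem the entrywise exponential of a Gram matrix is. So `A = K + σ²I` is positive
definite, and Cauchy–Schwarz for the form of `A` gives `gᵀA⁻¹g ≥ (g·g)² / gᵀAg` for every row `g`
of `G`. For the axis design both sides are explicit; with `t = ε² = σ/√(2m)` the bounds
`e⁻ᵗ ≥ 1 - t` and `1 - e⁻²ᵗ ≤ 2t` turn each row's contribution `1 - gᵀA⁻¹g` into at most
`2t/(1+t) ≤ √(2σ²/(m+σ²))`.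
-/

open Matrix

namespace Matrix

variable {ι : Type*} [Fintype ι]

theorem PosSemidef.map_pow {M : Matrix ι ι ℝ} (hM : M.PosSemidef) (n : ℕ) :
    (M.map (· ^ n)).PosSemidef := by
  induction n with
  | zero =>
    have h : M.map (· ^ 0) = vecMulVec 1 (star 1) := by ext; simp [vecMulVec]
    exact h ▸ posSemidef_vecMulVec_self_star 1
  | succ n ih =>
    have h : M.map (· ^ (n + 1)) = M.map (· ^ n) ⊙ M := by ext; simp [pow_succ]
    exact h ▸ ih.hadamard hM

theorem PosSemidef.map_exp {M : Matrix ι ι ℝ} (hM : M.PosSemidef) :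
    (M.map Real.exp).PosSemidef := by
  refine .of_dotProduct_mulVec_nonneg (hM.isHermitian.map _ fun _ ↦ rfl) fun x ↦ ?_
  have hseries : HasSum (fun n ↦ (n.factorial : ℝ)⁻¹ * (x ⬝ᵥ M.map (· ^ n) *ᵥ x))
      (x ⬝ᵥ M.map Real.exp *ᵥ x) := by
    simp only [dotProduct, mulVec, Finset.mul_sum, map_apply]
    refine hasSum_sum fun j _ ↦ hasSum_sum fun l _ ↦ ?_
    have h := (Real.exp_eq_exp_ℝ ▸ NormedSpace.expSeries_div_hasSum_exp (M j l)).mul_left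
      (x j * x l)
    rw [show x j * (Real.exp (M j l) * x l) = x j * x l * Real.exp (M j l) by ring]
    exact h.congr_fun fun n ↦ by ring
  refine hseries.nonneg fun n ↦ mul_nonneg (by positivity) ?_
  simpa using (hM.map_pow n).dotProduct_mulVec_nonneg x

theorem PosSemidef.dotProduct_mulVec_sq_le {A : Matrix ι ι ℝ} (hA : A.PosSemidef)
    (x y : ι → ℝ) : (x ⬝ᵥ A *ᵥ y) ^ 2 ≤ (x ⬝ᵥ A *ᵥ x) * (y ⬝ᵥ A *ᵥ y) := by
  -- Cauchy–Schwarz for the semi-inner product `⟪x, y⟫ = (A *ᵥ y) ⬝ᵥ x` induced by `A`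
  let _ := A.toSeminormedAddCommGroup hA
  let _ := A.toInnerProductSpace hA
  have hcs : ((A *ᵥ x) ⬝ᵥ star y) * ((A *ᵥ x) ⬝ᵥ star y) ≤
      ((A *ᵥ y) ⬝ᵥ star y) * ((A *ᵥ x) ⬝ᵥ star x) :=
    real_inner_mul_inner_self_le y x
  have hsym : y ⬝ᵥ A *ᵥ x = x ⬝ᵥ A *ᵥ y := by
    rw [dotProduct_mulVec, ← mulVec_transpose, dotProduct_comm,
      ← conjTranspose_eq_transpose_of_trivial, hA.isHermitian.eq]
  simp only [star_trivial, dotProduct_comm (A *ᵥ _), hsym] at hcs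
  nlinarith [hcs]

theorem PosDef.sq_dotProduct_div_le_dotProduct_inv_mulVec [DecidableEq ι] {A : Matrix ι ι ℝ}
    (hA : A.PosDef) (v : ι → ℝ) : (v ⬝ᵥ v) ^ 2 / (v ⬝ᵥ A *ᵥ v) ≤ v ⬝ᵥ A⁻¹ *ᵥ v := by
  have hcs := hA.posSemidef.dotProduct_mulVec_sq_le v (A⁻¹ *ᵥ v)
  rw [mulVec_mulVec, mul_nonsing_inv _ (A.isUnit_iff_isUnit_det.mp hA.isUnit), one_mulVec,
    dotProduct_comm (A⁻¹ *ᵥ v)] at hcs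
  refine div_le_of_le_mul₀ ?_ ?_ (hcs.trans_eq (mul_comm _ _))
  · simpa using hA.posSemidef.dotProduct_mulVec_nonneg v
  · simpa using hA.inv.posSemidef.dotProduct_mulVec_nonneg v

theorem trace_mul_mul_transpose {κ : Type*} [Fintype κ] (G : Matrix κ ι ℝ) (B : Matrix ι ι ℝ) :
    trace (G * B * Gᵀ) = ∑ i, G i ⬝ᵥ B *ᵥ G i := by
  simp only [trace, diag, mul_apply, transpose_apply, dotProduct, mulVec, Finset.sum_mul,
    Finset.mul_sum]
  exact Finset.sum_congr rfl fun i _ ↦ Finset.sum_comm.trans <|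
    Finset.sum_congr rfl fun _ _ ↦ Finset.sum_congr rfl fun _ _ ↦ by ring

theorem PosDef.card_sub_trace_mul_inv_mul_transpose_le [DecidableEq ι] {κ : Type*} [Fintype κ]
    {A : Matrix ι ι ℝ} (hA : A.PosDef) (G : Matrix κ ι ℝ) :
    (Fintype.card κ : ℝ) - trace (G * A⁻¹ * Gᵀ) ≤
      ∑ i, (1 - (G i ⬝ᵥ G i) ^ 2 / (G i ⬝ᵥ A *ᵥ G i)) := by
  rw [trace_mul_mul_transpose, Finset.sum_sub_distrib, Finset.sum_const, Finset.card_univ,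
    nsmul_one]
  gcongr with i
  exact hA.sq_dotProduct_div_le_dotProduct_inv_mulVec (G i)

end Matrix

section RBF

variable {ι : Type*} {d : ℕ}

noncomputable def rbfKernelMatrix {E : Type*} [NormedAddCommGroup E] (z : ι → E) :
    Matrix ι ι ℝ :=
  of fun j l ↦ Real.exp (-(1 / 2) * ‖z j - z l‖ ^ 2)

noncomputable def rbfGradCrossCov (z : ι → EuclideanSpace ℝ (Fin d)) : Matrix (Fin d) ι ℝ :=
  of fun i j ↦ z j i * Real.exp (-(1 / 2) * ‖z j‖ ^ 2)

variable {E : Type*} [NormedAddCommGroup E] [InnerProductSpace ℝ E]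

theorem rbfKernelMatrix_apply (z : ι → E) (j l : ι) :
    rbfKernelMatrix z j l = Real.exp (-(1 / 2) * ‖z j‖ ^ 2) * Real.exp (inner ℝ (z j) (z l)) *
      Real.exp (-(1 / 2) * ‖z l‖ ^ 2) := by
  rw [rbfKernelMatrix, of_apply, ← Real.exp_add, ← Real.exp_add, norm_sub_sq_real]
  ring_nf

variable [Fintype ι]

noncomputable def rbfGradPosteriorTrace [DecidableEq ι] (σ : ℝ)
    (z : ι → EuclideanSpace ℝ (Fin d)) : ℝ :=
  d - trace (rbfGradCrossCov z * (rbfKernelMatrix z + σ ^ 2 • 1)⁻¹ * (rbfGradCrossCov z)ᵀ)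

theorem posSemidef_rbfKernelMatrix (z : ι → E) : (rbfKernelMatrix z).PosSemidef := by
  set a : ι → ℝ := fun j ↦ Real.exp (-(1 / 2) * ‖z j‖ ^ 2)
  have h : rbfKernelMatrix z = vecMulVec a (star a) ⊙ (gram ℝ z).map Real.exp := by
    ext j l
    simp only [rbfKernelMatrix_apply, hadamard_apply, vecMulVec_apply, map_apply, gram_apply,
      star_trivial, a]
    ring
  exact h ▸ (posSemidef_vecMulVec_self_star a).hadamard (posSemidef_gram ℝ z).map_exp

theorem posDef_rbfKernelMatrix_add_smul_one [DecidableEq ι] (z : ι → E) {c : ℝ} (hc : 0 < c) :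
    (rbfKernelMatrix z + c • 1).PosDef :=
  PosDef.posSemidef_add (posSemidef_rbfKernelMatrix z) (PosDef.one.smul hc)

theorem rbfGradPosteriorTrace_comp_equiv {κ : Type*} [Fintype κ] [DecidableEq ι] [DecidableEq κ]
    (σ : ℝ) (z : ι → EuclideanSpace ℝ (Fin d)) (e : ι ≃ κ) :
    rbfGradPosteriorTrace σ (z ∘ e.symm) = rbfGradPosteriorTrace σ z := by
  have hK : rbfKernelMatrix (z ∘ e.symm) + σ ^ 2 • 1 =
      (rbfKernelMatrix z + σ ^ 2 • 1).submatrix e.symm e.symm := by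
    rw [← submatrix_one_equiv e.symm]; rfl
  have hG : rbfGradCrossCov (z ∘ e.symm) = (rbfGradCrossCov z).submatrix id e.symm := rfl
  rw [rbfGradPosteriorTrace, rbfGradPosteriorTrace, hK, hG, inv_submatrix_equiv,
    transpose_submatrix, submatrix_mul_equiv, submatrix_mul_equiv, submatrix_id_id]

theorem rbfGradPosteriorTrace_le [DecidableEq ι] {σ : ℝ} (hσ : 0 < σ)
    (z : ι → EuclideanSpace ℝ (Fin d)) :
    rbfGradPosteriorTrace σ z ≤ ∑ i, (1 - (rbfGradCrossCov z i ⬝ᵥ rbfGradCrossCov z i) ^ 2 /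
      (rbfGradCrossCov z i ⬝ᵥ (rbfKernelMatrix z + σ ^ 2 • 1) *ᵥ rbfGradCrossCov z i)) := by
  have h := PosDef.card_sub_trace_mul_inv_mul_transpose_le
    (posDef_rbfKernelMatrix_add_smul_one z (pow_pos hσ 2)) (rbfGradCrossCov z)
  rwa [Fintype.card_fin] at h

end RBF

section crossDesign

variable {d : ℕ} (m : ℕ) (ε : ℝ)

noncomputable def crossDesign (p : Fin d × Fin m × Fin 2) : EuclideanSpace ℝ (Fin d) :=
  EuclideanSpace.single p.1 (![ε, -ε] p.2.2)

theorem crossDesign_apply (p : Fin d × Fin m × Fin 2) (i : Fin d) :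
    crossDesign m ε p i = if i = p.1 then ![ε, -ε] p.2.2 else 0 :=
  PiLp.single_apply _ _ _ _ _

theorem norm_crossDesign_sq (p : Fin d × Fin m × Fin 2) : ‖crossDesign m ε p‖ ^ 2 = ε ^ 2 := by
  obtain ⟨i, r, s⟩ := p
  fin_cases s <;> simp [crossDesign]

theorem inner_crossDesign (p q : Fin d × Fin m × Fin 2) :
    inner ℝ (crossDesign m ε p) (crossDesign m ε q) =
      if p.1 = q.1 then ![ε, -ε] p.2.2 * ![ε, -ε] q.2.2 else 0 := by
  simp [crossDesign, EuclideanSpace.inner_single_left, PiLp.single_apply]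

theorem rbfGradCrossCov_crossDesign_dotProduct_self (i : Fin d) :
    rbfGradCrossCov (crossDesign m ε) i ⬝ᵥ rbfGradCrossCov (crossDesign m ε) i =
      2 * m * ε ^ 2 * Real.exp (-ε ^ 2) := by
  simp only [dotProduct, rbfGradCrossCov, crossDesign_apply, one_div, norm_crossDesign_sq, neg_mul,
    ite_mul, zero_mul, of_apply, mul_ite, mul_zero, Fintype.sum_prod_type, Finset.sum_ite_irrel,
    Fin.sum_univ_two, cons_val_zero, cons_val_one, cons_val_fin_one, mul_neg, neg_neg,
    Finset.sum_const, Finset.card_univ, Fintype.card_fin, smul_add, nsmul_eq_mul, Finset.sum_ite_eq,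
    Finset.mem_univ, ↓reduceIte]
  have hc : Real.exp (-(2⁻¹ * ε ^ 2)) ^ 2 = Real.exp (-ε ^ 2) := by
    rw [← Real.exp_nat_mul]; ring_nf
  linear_combination 2 * m * ε ^ 2 * hc

theorem rbfGradCrossCov_crossDesign_dotProduct_mulVec (σ : ℝ) (i : Fin d) :
    rbfGradCrossCov (crossDesign m ε) i ⬝ᵥ
        (rbfKernelMatrix (crossDesign m ε) + σ ^ 2 • 1) *ᵥ rbfGradCrossCov (crossDesign m ε) i =
      2 * m * ε ^ 2 * Real.exp (-ε ^ 2) * (m * (1 - Real.exp (-(2 * ε ^ 2))) + σ ^ 2) := by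
  rw [add_mulVec, dotProduct_add, smul_mulVec, one_mulVec, dotProduct_smul, smul_eq_mul,
    rbfGradCrossCov_crossDesign_dotProduct_self]
  simp only [dotProduct, rbfGradCrossCov, crossDesign_apply, one_div, norm_crossDesign_sq, neg_mul,
    ite_mul, zero_mul, of_apply, mulVec, rbfKernelMatrix_apply, inner_crossDesign, mul_ite,
    mul_zero, Fintype.sum_prod_type, Finset.sum_ite_irrel, Fin.sum_univ_two, cons_val_zero,
    cons_val_one, cons_val_fin_one, mul_neg, Finset.sum_const, Finset.card_univ, Fintype.card_fin,
    smul_add, nsmul_eq_mul, smul_neg, Finset.sum_ite_eq, Finset.mem_univ, ↓reduceIte, neg_neg]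
  have hc : Real.exp (-(2⁻¹ * ε ^ 2)) ^ 2 = Real.exp (-ε ^ 2) := by
    rw [← Real.exp_nat_mul]; ring_nf
  have hu : Real.exp (ε * ε) * Real.exp (-ε ^ 2) = 1 := by
    rw [← Real.exp_add]; ring_nf; exact Real.exp_zero
  have h2 : Real.exp (-(2 * ε ^ 2)) = Real.exp (-ε ^ 2) ^ 2 := by
    rw [← Real.exp_nat_mul]; ring_nf
  rw [show -(ε * ε) = -ε ^ 2 by ring, h2]
  set c := Real.exp (-(2⁻¹ * ε ^ 2))
  set u := Real.exp (ε * ε)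
  set E := Real.exp (-ε ^ 2)
  linear_combination 2 * m ^ 2 * ε ^ 2 * (E * hu + (c ^ 2 + E) * u * hc - E * (c ^ 2 + E) * hc)

theorem rbfGradPosteriorTrace_crossDesign_le {σ : ℝ} (hσ : 0 < σ) :
    rbfGradPosteriorTrace σ (crossDesign (d := d) m ε) ≤
      d * (1 - 2 * m * ε ^ 2 * Real.exp (-ε ^ 2) /
        (m * (1 - Real.exp (-(2 * ε ^ 2))) + σ ^ 2)) := by
  have hcancel (a b : ℝ) : a ^ 2 / (a * b) = a / b := by
    rcases eq_or_ne a 0 with rfl | ha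
    · simp
    · rw [sq, mul_div_mul_left _ _ ha]
  refine (rbfGradPosteriorTrace_le hσ _).trans_eq ?_
  simp only [rbfGradCrossCov_crossDesign_dotProduct_self,
    rbfGradCrossCov_crossDesign_dotProduct_mulVec, hcancel, Finset.sum_const, Finset.card_univ,
    Fintype.card_fin, nsmul_eq_mul]

end crossDesign

open Real in
theorem one_sub_div_le_two_mul_div {m σ t : ℝ} (hm : 0 < m) (ht : 0 < t)
    (hmt : 2 * m * t ^ 2 = σ ^ 2) :
    1 - 2 * m * t * exp (-t) / (m * (1 - exp (-(2 * t))) + σ ^ 2) ≤ 2 * t / (1 + t) := by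
  have hexp : 1 - t ≤ exp (-t) := by linarith [add_one_le_exp (-t)]
  have hexp2 : 1 - exp (-(2 * t)) ≤ 2 * t := by linarith [add_one_le_exp (-(2 * t))]
  have hexp2_le_one : exp (-(2 * t)) ≤ 1 := exp_le_one_iff.mpr (by linarith)
  have hden : 0 < m * (1 - exp (-(2 * t))) + σ ^ 2 := by
    rw [← hmt]; nlinarith [mul_pos hm ht]
  calc 1 - 2 * m * t * exp (-t) / (m * (1 - exp (-(2 * t))) + σ ^ 2)
      ≤ 1 - 2 * m * t * (1 - t) / (2 * m * t + σ ^ 2) := by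
        gcongr 1 - ?_
        calc 2 * m * t * (1 - t) / (2 * m * t + σ ^ 2)
            ≤ 2 * m * t * exp (-t) / (2 * m * t + σ ^ 2) := by gcongr
          _ ≤ 2 * m * t * exp (-t) / (m * (1 - exp (-(2 * t))) + σ ^ 2) :=
            div_le_div_of_nonneg_left (by positivity) hden (by nlinarith)
    _ = 2 * t / (1 + t) := by
        rw [← hmt]; field_simp; ring

open Real in
theorem one_sub_div_le_sqrt {m σ t : ℝ} (hm : 0 < m) (ht : 0 < t) (hmt : 2 * m * t ^ 2 = σ ^ 2) :
    1 - 2 * m * t * exp (-t) / (m * (1 - exp (-(2 * t))) + σ ^ 2) ≤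
      √(2 * σ ^ 2 / (m + σ ^ 2)) := by
  rcases le_or_gt t 2 with ht2 | ht2
  · refine (one_sub_div_le_two_mul_div hm ht hmt).trans (le_sqrt_of_sq_le ?_)
    rw [← hmt, div_pow, div_le_div_iff₀ (by positivity) (by positivity)]
    nlinarith [mul_nonneg (mul_pos hm (pow_pos ht 3)).le (sub_nonneg.mpr ht2)]
  · have hratio : 0 ≤ 2 * m * t * exp (-t) / (m * (1 - exp (-(2 * t))) + σ ^ 2) := by
      have : exp (-(2 * t)) ≤ 1 := exp_le_one_iff.mpr (by linarith)
      exact div_nonneg (by positivity) (by nlinarith)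
    -- here `σ² = 2mt² > m`, so the square root is at least `1`
    refine (sub_le_self 1 hratio).trans (one_le_sqrt.mpr ?_)
    rw [le_div_iff₀ (by positivity), ← hmt]
    nlinarith [mul_lt_mul_of_pos_left (by nlinarith : (4 : ℝ) < t ^ 2) hm]

theorem rbf_noisy_error_function_bound_general (d m : ℕ) (hm : 1 ≤ m)
    (σ : ℝ) (hσ : 0 < σ) :
    ∃ Z : Fin (2 * m * d) → EuclideanSpace ℝ (Fin d),
      ∀ (K : Matrix (Fin (2 * m * d)) (Fin (2 * m * d)) ℝ)
        (G : Matrix (Fin d) (Fin (2 * m * d)) ℝ),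
        K = Matrix.of (fun j l => Real.exp (-(1 / 2) * ‖Z j - Z l‖ ^ 2)) →
        G = Matrix.of (fun i j => Z j i * Real.exp (-(1 / 2) * ‖Z j‖ ^ 2)) →
        IsUnit (K + σ ^ 2 • (1 : Matrix (Fin (2 * m * d)) (Fin (2 * m * d)) ℝ)).det ∧
          (d : ℝ) - Matrix.trace (G * (K + σ ^ 2 • 1)⁻¹ * Gᵀ) ≤
            (d : ℝ) * Real.sqrt (2 * σ ^ 2 / ((m : ℝ) + σ ^ 2)) := by
  have hm₀ : (0 : ℝ) < m := by exact_mod_cast hm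
  set t := σ / √(2 * m)
  have ht : 0 < t := by positivity
  have hmt : 2 * m * t ^ 2 = σ ^ 2 := by
    rw [div_pow, Real.sq_sqrt (by positivity)]; field_simp
  let e : Fin d × Fin m × Fin 2 ≃ Fin (2 * m * d) := Fintype.equivFinOfCardEq (by simp; ring)
  refine ⟨crossDesign m √t ∘ e.symm, ?_⟩
  rintro K G rfl rfl
  refine ⟨(posDef_rbfKernelMatrix_add_smul_one _ (pow_pos hσ 2)).det_pos.ne'.isUnit, ?_⟩
  change rbfGradPosteriorTrace σ (crossDesign m √t ∘ e.symm) ≤ _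
  rw [rbfGradPosteriorTrace_comp_equiv]
  refine (rbfGradPosteriorTrace_crossDesign_le m √t hσ).trans ?_
  rw [Real.sq_sqrt ht.le]
  exact mul_le_mul_of_nonneg_left (one_sub_div_le_sqrt hm₀ ht hmt) d.cast_nonneg

/-- For the RBF kernel with noise variance `σ² > 0`, there is a design of `2md` points whose
posterior gradient covariance at the origin has trace at most `d·√(2σ²/(m+σ²))`. -/
theorem rbf_noisy_error_function_bound (d m : ℕ) (hd : 1 ≤ d) (hm : 1 ≤ m)
    (σ : ℝ) (hσ : 0 < σ) :
    ∃ Z : Fin (2 * m * d) → EuclideanSpace ℝ (Fin d),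
      ∀ (K : Matrix (Fin (2 * m * d)) (Fin (2 * m * d)) ℝ)
        (G : Matrix (Fin d) (Fin (2 * m * d)) ℝ),
        K = Matrix.of (fun j l => Real.exp (-(1 / 2) * ‖Z j - Z l‖ ^ 2)) →
        G = Matrix.of (fun i j => Z j i * Real.exp (-(1 / 2) * ‖Z j‖ ^ 2)) →
        IsUnit (K + σ ^ 2 • (1 : Matrix (Fin (2 * m * d)) (Fin (2 * m * d)) ℝ)).det ∧
          (d : ℝ) - Matrix.trace (G * (K + σ ^ 2 • 1)⁻¹ * Gᵀ) ≤
            (d : ℝ) * Real.sqrt (2 * σ ^ 2 / ((m : ℝ) + σ ^ 2)) :=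
  rbf_noisy_error_function_bound_general d m hm σ hσ
end
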